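/- Let g be a hyperbolic automorphism of a connected locally finite δ-hyperbolic graph Γ. Then there exists a bi-infinite geodesic γ in Γ and n ∈ ℕ such that gⁿ acts as a translation along γ (i.e., gⁿ maps γ to itself, shifting it by a fixed positive amount). -/

import Mathlib

/-- The Gromov product on a graph, with respect to the graph metric. -/
noncomputable def gGP {V : Type*} (Γ : SimpleGraph V) (p x y : V) : ℝ :=
  ((Γ.dist p x : ℝ) + (Γ.dist p y : ℝ) - (Γ.dist x y : ℝ)) / 2

/-- `Γ` is `δ`-hyperbolic: the four-point Gromov product condition holds. -/
def GraphHyp {V : Type*} (Γ : SimpleGraph V) (δ : ℝ) : Prop :=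
  ∀ p x y z : V, min (gGP Γ p x z) (gGP Γ p y z) - δ ≤ gGP Γ p x y

/-- The sequence `u` of vertices converges at infinity (to a point of the Gromov
boundary `∂Γ`). -/
def gConvAtInf {V : Type*} (Γ : SimpleGraph V) (p : V) (u : ℕ → V) : Prop :=
  ∀ M : ℝ, ∃ N : ℕ, ∀ i j : ℕ, N ≤ i → N ≤ j → M ≤ gGP Γ p (u i) (u j)

/-- The sequences `u` and `v` of vertices converge to the same boundary point of `∂Γ`. -/
def gEquivAtInf {V : Type*} (Γ : SimpleGraph V) (p : V) (u v : ℕ → V) : Prop :=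
  ∀ M : ℝ, ∃ N : ℕ, ∀ i j : ℕ, N ≤ i → N ≤ j → M ≤ gGP Γ p (u i) (v j)

/-- The scale function on a t.d.l.c. group:
`s(g) = min{[gUg⁻¹ : gUg⁻¹ ∩ U] : U compact open subgroup}`. -/
noncomputable def scale {G : Type*} [Group G] [TopologicalSpace G] (g : G) : ℕ :=
  sInf {n : ℕ | ∃ U : Subgroup G, IsCompact (U : Set G) ∧ IsOpen (U : Set G) ∧
    n = U.relIndex (U.map (MulAut.conj g).toMonoidHom)}


/-!
Fix a vertex `p`. The two ends of the `g`-orbit of `p` are distinct boundary points, so the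
Gromov products `(gⁱp | g⁻ʲp)_p` are eventually bounded, and `n ↦ d(p, gⁿp)` is superadditive
up to a constant. Hence for `ψ = gᵐ` with `m` large and a suitable ball `B` around `p`, some
geodesic from `x ∈ B` to `ψˢ⁺¹y`, `y ∈ B`, passes through `ψˢB`: on `B` the displacements
`d(x, ψˢy)` are the min-plus powers of the weights `d(x, ψy)` of a finite digraph. A cycle of
minimal mean weight in this digraph, of length `L` and weight `W`, gives a vertex `x` with
`d(x, ψˢᴸx) = sW` for all `s`, and `W > 0` because orbits are unbounded. The translates of a
geodesic from `x` to `ψᴸx` then fit together into a geodesic line translated by `ψᴸ`.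
-/

open Function Set

namespace RelIso

variable {α : Type*} {r : α → α → Prop}

lemma coe_pow (e : r ≃r r) (n : ℕ) : ⇑(e ^ n) = (⇑e)^[n] := by
  induction n with
  | zero => rfl
  | succ n ih => rw [pow_succ, coe_mul, ih, iterate_succ]

end RelIso

namespace SimpleGraph

variable {V V' : Type*} {G : SimpleGraph V} {G' : SimpleGraph V'} {u v : V}

lemma Hom.edist_map_le (f : G →g G') (u v : V) : G'.edist (f u) (f v) ≤ G.edist u v :=
  le_iInf fun w => by simpa using edist_le (w.map f)

lemma Iso.dist_map (φ : G ≃g G') (u v : V) : G'.dist (φ u) (φ v) = G.dist u v := by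
  refine congrArg ENat.toNat (le_antisymm (φ.toHom.edist_map_le u v) ?_)
  simpa using φ.symm.toHom.edist_map_le (φ u) (φ v)

lemma Walk.dist_getVert_add_le (w : G.Walk u v) (r k : ℕ) :
    G.dist (w.getVert r) (w.getVert (r + k)) ≤ k := by
  have h := dist_le ((w.drop r).take k)
  rw [Walk.take_length, Walk.drop_getVert] at h
  exact h.trans (min_le_left _ _)

lemma Walk.dist_getVert_of_length_eq_dist (hconn : G.Connected) {w : G.Walk u v}
    (hw : w.length = G.dist u v) {k : ℕ} (hk : k ≤ w.length) :
    G.dist u (w.getVert k) = k ∧ G.dist (w.getVert k) v = G.dist u v - k := by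
  have h₁ := w.dist_getVert_add_le 0 k
  have h₂ := w.dist_getVert_add_le k (w.length - k)
  rw [Nat.add_sub_cancel' hk, w.getVert_length] at h₂
  rw [zero_add, w.getVert_zero] at h₁
  have := hconn.dist_triangle (u := u) (v := w.getVert k) (w := v)
  omega

lemma Connected.finite_setOf_dist_le (hconn : G.Connected)
    (hlf : ∀ v, (G.neighborSet v).Finite) (p : V) (R : ℕ) : {v | G.dist p v ≤ R}.Finite := by
  induction R with
  | zero => simp [hconn.dist_eq_zero_iff]
  | succ R ih =>
    refine (ih.union (ih.biUnion fun u _ => hlf u)).subset fun v hv => ?_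
    by_cases hR : G.dist p v ≤ R
    · exact Or.inl hR
    obtain ⟨w, hw⟩ := hconn.exists_walk_length_eq_dist p v
    have hv : G.dist p v ≤ R + 1 := hv
    have hlen : w.length = R + 1 := by omega
    refine Or.inr (mem_biUnion (x := w.getVert R) ?_ ?_)
    · simpa using w.dist_getVert_add_le 0 R
    · simpa [hlen, ← w.getVert_length] using w.adj_getVert_succ (i := R) (by omega)

lemma Iso.bddAbove_dist_pow_of_pow_apply_eq (ψ : G ≃g G) {x : V} {n : ℕ} (hn : 0 < n)
    (hx : (ψ ^ n) x = x) : BddAbove (range fun k : ℕ => G.dist x ((ψ ^ k) x)) := by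
  have hper : IsPeriodicPt ψ n x := by rw [IsPeriodicPt, IsFixedPt, ← RelIso.coe_pow, hx]
  refine (finite_range fun k : Fin n => G.dist x ((ψ ^ (k : ℕ)) x)).bddAbove.mono ?_
  rintro _ ⟨k, rfl⟩
  exact ⟨⟨k % n, Nat.mod_lt _ hn⟩, by simp only [RelIso.coe_pow, hper.iterate_mod_apply]⟩

end SimpleGraph

section GromovProduct

variable {V : Type*} {G : SimpleGraph V}

lemma gGP_comm (w x y : V) : gGP G w x y = gGP G w y x := by
  simp only [gGP, SimpleGraph.dist_comm (u := x)]
  ring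

lemma gGP_map (φ : G ≃g G) (w x y : V) : gGP G (φ w) (φ x) (φ y) = gGP G w x y := by
  simp only [gGP, SimpleGraph.Iso.dist_map]

lemma sub_dist_le_gGP (hconn : G.Connected) (w x y : V) :
    (G.dist w x : ℝ) - G.dist x y ≤ gGP G w x y := by
  have h : G.dist w x ≤ G.dist w y + G.dist y x := hconn.dist_triangle
  rw [SimpleGraph.dist_comm (u := y)] at h
  have h' : (G.dist w x : ℝ) ≤ G.dist w y + G.dist x y := by exact_mod_cast h
  rw [gGP]
  linarith

end GromovProduct

namespace GraphHyp

variable {V : Type*} {G : SimpleGraph V} {δ : ℝ}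

lemma gGP_le_of_lt_gGP (hhyp : GraphHyp G δ) {w p q x y : V} {K : ℝ} (hpq : gGP G w p q ≤ K)
    (hpx : K + δ < gGP G w p x) (hqy : K + 2 * δ < gGP G w q y) : gGP G w x y ≤ K + 2 * δ := by
  have hqx : gGP G w x q ≤ K + δ := by
    by_contra! h
    have := hhyp w p q x
    rw [gGP_comm w x q] at h
    linarith [lt_min hpx h]
  by_contra! h
  have := hhyp w x q y
  linarith [lt_min h hqy]

lemma exists_gGP_le_of_not_gEquivAtInf (hhyp : GraphHyp G δ) (hδ : 0 ≤ δ) {p : V}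
    {u v : ℕ → V} (hu : gConvAtInf G p u) (hv : gConvAtInf G p v) (huv : ¬gEquivAtInf G p u v) :
    ∃ K : ℝ, ∃ N : ℕ, ∀ i j, N ≤ i → N ≤ j → gGP G p (u i) (v j) ≤ K := by
  unfold gEquivAtInf at huv
  push Not at huv
  obtain ⟨M, hM⟩ := huv
  obtain ⟨N₁, hN₁⟩ := hu (M + 2 * δ + 1)
  obtain ⟨N₂, hN₂⟩ := hv (M + 2 * δ + 1)
  obtain ⟨i', j', hi', hj', hM'⟩ := hM (max N₁ N₂)
  refine ⟨M + 2 * δ, max N₁ N₂, fun i j hi hj => hhyp.gGP_le_of_lt_gGP hM'.le ?_ ?_⟩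
  · linarith [hN₁ i' i (le_of_max_le_left hi') (le_of_max_le_left hi)]
  · linarith [hN₂ j' j (le_of_max_le_right hj') (le_of_max_le_right hj)]

lemma exists_between_dist_le_gGP (hhyp : GraphHyp G δ) (hconn : G.Connected) (x y w : V) :
    ∃ z, G.dist x z + G.dist z y = G.dist x y ∧ (G.dist w z : ℝ) ≤ gGP G w x y + 2 * δ + 1 := by
  obtain ⟨σ, hσ⟩ := hconn.exists_walk_length_eq_dist x y
  have h₁ : (G.dist w y : ℝ) ≤ G.dist w x + G.dist x y := by exact_mod_cast hconn.dist_triangle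
  have h₂ : (G.dist w x : ℝ) ≤ G.dist w y + G.dist x y := by
    rw [G.dist_comm (u := x)]
    exact_mod_cast hconn.dist_triangle
  have hgp : gGP G x w y = (G.dist w x + G.dist x y - G.dist w y) / 2 := by
    rw [gGP, G.dist_comm (u := x)]
  -- `z` is the point of a geodesic from `x` to `y` at distance `⌊(w|y)_x⌋` from `x`
  set r := ⌊gGP G x w y⌋₊
  have hr₀ : (r : ℝ) ≤ gGP G x w y := Nat.floor_le (by rw [hgp]; linarith)
  have hr₁ : gGP G x w y < r + 1 := Nat.lt_floor_add_one _
  have hr : r ≤ σ.length := hσ ▸ Nat.floor_le_of_le (by rw [hgp]; linarith)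
  obtain ⟨hxz, hzy⟩ := σ.dist_getVert_of_length_eq_dist hconn hσ hr
  refine ⟨σ.getVert r, by omega, ?_⟩
  have h4 := hhyp w x y (σ.getVert r)
  rw [hgp] at hr₀ hr₁
  simp only [gGP, G.dist_comm (u := y), hxz, hzy] at h4 ⊢
  rw [Nat.cast_sub (by omega)] at h4
  rw [min_eq_right (by linarith)] at h4
  linarith

end GraphHyp

section MinMeanCycle

variable {V : Type*}

def chainWeight (w : V → V → ℕ) (c : ℕ → V) (l : ℕ) : ℕ :=
  ∑ r ∈ Finset.range l, w (c r) (c (r + 1))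

def IsClosedChainIn (B : Set V) (c : ℕ → V) (l : ℕ) : Prop :=
  c l = c 0 ∧ ∀ r ≤ l, c r ∈ B

lemma chainWeight_add (w : V → V → ℕ) (c : ℕ → V) (a b : ℕ) :
    chainWeight w c (a + b) = chainWeight w c a + chainWeight w (fun r => c (a + r)) b := by
  simp only [chainWeight, Finset.sum_range_add, add_assoc]

lemma chainWeight_succ (w : V → V → ℕ) (c : ℕ → V) (l : ℕ) :
    chainWeight w c (l + 1) = chainWeight w c l + w (c l) (c (l + 1)) :=
  Finset.sum_range_succ _ _

lemma chainWeight_congr {w : V → V → ℕ} {c c' : ℕ → V} {l : ℕ} (h : ∀ r ≤ l, c r = c' r) :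
    chainWeight w c l = chainWeight w c' l :=
  Finset.sum_congr rfl fun r hr => by
    rw [Finset.mem_range] at hr
    rw [h r hr.le, h (r + 1) hr]

lemma chainWeight_eq_add_of_eq {w : V → V → ℕ} {c : ℕ → V} {i Δ : ℕ} (hc : c (i + Δ) = c i)
    (k : ℕ) :
    chainWeight w c (i + Δ + k) = chainWeight w (fun r => c (i + r)) Δ +
      chainWeight w (fun r => if r ≤ i then c r else c (r + Δ)) (i + k) := by
  have hhead : chainWeight w (fun r => if r ≤ i then c r else c (r + Δ)) i = chainWeight w c i :=
    chainWeight_congr fun r hr => if_pos hr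
  have htail : chainWeight w (fun r => if i + r ≤ i then c (i + r) else c (i + r + Δ)) k =
      chainWeight w (fun r => c (i + Δ + r)) k := by
    refine chainWeight_congr fun r _ => ?_
    rcases r with _ | r
    · simp [hc]
    · simp only [show ¬i + (r + 1) ≤ i by omega, if_false]
      ring_nf
  rw [chainWeight_add w c (i + Δ), chainWeight_add w c i, chainWeight_add _ _ i k, hhead, htail]
  ring

theorem exists_minMeanCycle {B : Set V} (hB : B.Finite) (hne : B.Nonempty) (w : V → V → ℕ) :
    ∃ L, 0 < L ∧ ∃ c₀, IsClosedChainIn B c₀ L ∧ ∀ l c, IsClosedChainIn B c l →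
      chainWeight w c₀ L * l ≤ chainWeight w c l * L := by
  classical
  set N := hB.toFinset.card
  have hN : 0 < N := Finset.card_pos.2 (by simpa using hne)
  -- `N ! / l` clears the denominator of the mean weight of a closed chain of length `l ≤ N`
  have hex : ∃ n, ∃ l c, (0 < l ∧ l ≤ N ∧ IsClosedChainIn B c l) ∧
      chainWeight w c l * (N.factorial / l) = n := by
    obtain ⟨x, hx⟩ := hne
    exact ⟨_, 1, fun _ => x, ⟨one_pos, hN, rfl, fun _ _ => hx⟩, rfl⟩
  obtain ⟨L, c₀, ⟨hL, hLN, hc₀⟩, hc₀min⟩ := Nat.find_spec hex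
  have hshort : ∀ l c, 0 < l → l ≤ N → IsClosedChainIn B c l →
      chainWeight w c₀ L * l ≤ chainWeight w c l * L := by
    intro l c hl hlN hc
    have hle := hc₀min ▸ Nat.find_min' hex ⟨l, c, ⟨hl, hlN, hc⟩, rfl⟩
    have hL' := Nat.div_mul_cancel (Nat.dvd_factorial hL hLN)
    have hl' := Nat.div_mul_cancel (Nat.dvd_factorial hl hlN)
    refine Nat.le_of_mul_le_mul_right ?_ (Nat.factorial_pos N)
    calc chainWeight w c₀ L * l * N.factorial
        = chainWeight w c₀ L * (N.factorial / L * L) * l := by rw [hL']; ring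
      _ = chainWeight w c₀ L * (N.factorial / L) * (L * l) := by ring
      _ ≤ chainWeight w c l * (N.factorial / l) * (L * l) := Nat.mul_le_mul_right _ hle
      _ = chainWeight w c l * L * (N.factorial / l * l) := by ring
      _ = chainWeight w c l * L * N.factorial := by rw [hl']
  refine ⟨L, hL, c₀, hc₀, fun l => ?_⟩
  induction l using Nat.strong_induction_on with
  | _ l ih =>
  intro c hc
  rcases Nat.eq_zero_or_pos l with rfl | hl
  · simp
  rcases le_or_gt l N with hlN | hNl
  · exact hshort l c hl hlN hc
  -- two of `c 0, …, c N` coincide, and the closed chain splits there into two shorter ones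
  obtain ⟨i, hi, j, hj, hij, hcij⟩ := Finset.exists_ne_map_eq_of_card_lt_of_maps_to
    (s := Finset.range (N + 1)) (t := hB.toFinset) (by simp [N])
    (fun r hr => by simpa using hc.2 r (by simp at hr; omega))
  wlog hlt : i < j generalizing i j
  · exact this j hj i hi hij.symm hcij.symm (by omega)
  obtain ⟨Δ, rfl⟩ : ∃ Δ, j = i + Δ := ⟨j - i, by omega⟩
  simp only [Finset.mem_range] at hj
  obtain ⟨k, rfl⟩ : ∃ k, l = i + Δ + k := ⟨l - (i + Δ), by omega⟩
  have hinner := ih Δ (by omega) (fun r => c (i + r))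
    ⟨hcij.symm.trans (by simp), fun r hr => hc.2 _ (by omega)⟩
  have houter := ih (i + k) (by omega) (fun r => if r ≤ i then c r else c (r + Δ)) (by
    refine ⟨?_, fun r hr => ?_⟩
    · rcases k with _ | k
      · simpa [hcij] using hc.1
      · simpa [show i + (k + 1) + Δ = i + Δ + (k + 1) by omega] using hc.1
    · dsimp only
      split_ifs
      · exact hc.2 r (by omega)
      · exact hc.2 _ (by omega))
  rw [chainWeight_eq_add_of_eq hcij.symm]
  linarith

end MinMeanCycle

namespace SimpleGraph

variable {V : Type*} {G : SimpleGraph V}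

def SplitsThrough (ψ : G ≃g G) (B : Set V) : Prop :=
  ∀ s ≥ 1, ∀ x ∈ B, ∀ y ∈ B, ∃ z ∈ B,
    G.dist x ((ψ ^ (s + 1)) y) = G.dist x ((ψ ^ s) z) + G.dist z (ψ y)

lemma Iso.dist_pow_le_chainWeight (hconn : G.Connected) (ψ : G ≃g G) (c : ℕ → V) (l : ℕ) :
    G.dist (c 0) ((ψ ^ l) (c l)) ≤ chainWeight (fun x y => G.dist x (ψ y)) c l := by
  induction l with
  | zero => simp [chainWeight]
  | succ l ih =>
    have h := hconn.dist_triangle (u := c 0) (v := (ψ ^ l) (c l)) (w := (ψ ^ (l + 1)) (c (l + 1)))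
    rw [pow_succ, RelIso.mul_apply, Iso.dist_map] at h
    rw [chainWeight_succ, pow_succ, RelIso.mul_apply]
    omega

lemma Iso.dist_pow_le_mul (hconn : G.Connected) (ψ : G ≃g G) (x : V) (s : ℕ) :
    G.dist x ((ψ ^ s) x) ≤ s * G.dist x (ψ x) := by
  induction s with
  | zero => simp
  | succ s ih =>
    have h := hconn.dist_triangle (u := x) (v := (ψ ^ s) x) (w := (ψ ^ (s + 1)) x)
    rw [pow_succ, RelIso.mul_apply, Iso.dist_map] at h
    rw [pow_succ, RelIso.mul_apply, add_one_mul]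
    linarith

lemma SplitsThrough.exists_chain {ψ : G ≃g G} {B : Set V} (h : SplitsThrough ψ B) {s : ℕ}
    (hs : 1 ≤ s) {x y : V} (hx : x ∈ B) (hy : y ∈ B) :
    ∃ c : ℕ → V, c 0 = x ∧ c s = y ∧ (∀ r ≤ s, c r ∈ B) ∧
      chainWeight (fun x y => G.dist x (ψ y)) c s = G.dist x ((ψ ^ s) y) := by
  induction s, hs using Nat.le_induction generalizing y with
  | base =>
    refine ⟨update (fun _ => x) 1 y, by simp, by simp, fun r hr => ?_, by simp [chainWeight]⟩
    interval_cases r <;> simpa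
  | succ s hs ih =>
    obtain ⟨z, hz, hsplit⟩ := h s hs x hx y hy
    obtain ⟨c, hc0, hcs, hcB, hcw⟩ := ih hz
    refine ⟨update c (s + 1) y, by simp [hc0], by simp, fun r hr => ?_, ?_⟩
    · rcases hr.lt_or_eq with hr | rfl
      · simpa [update_of_ne hr.ne] using hcB r (by omega)
      · simpa
    · rw [chainWeight_succ, hsplit, ← hcw]
      rw [update_self, update_of_ne (by omega), hcs]
      congr 1
      exact chainWeight_congr fun r hr => update_of_ne (by omega) _ _

lemma SplitsThrough.exists_dist_pow_mul_eq (hconn : G.Connected) {ψ : G ≃g G} {B : Set V}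
    (h : SplitsThrough ψ B) (hB : B.Finite) (hne : B.Nonempty) :
    ∃ x ∈ B, ∃ L > 0, ∃ W : ℕ, ∀ s : ℕ, G.dist x ((ψ ^ (s * L)) x) = s * W := by
  obtain ⟨L, hL, c₀, hc₀, hmin⟩ := exists_minMeanCycle hB hne fun x y => G.dist x (ψ y)
  set W := chainWeight (fun x y => G.dist x (ψ y)) c₀ L
  have hupper : G.dist (c₀ 0) ((ψ ^ L) (c₀ 0)) ≤ W :=
    hc₀.1 ▸ Iso.dist_pow_le_chainWeight hconn ψ c₀ L
  refine ⟨c₀ 0, hc₀.2 0 (Nat.zero_le _), L, hL, W, fun s => le_antisymm ?_ ?_⟩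
  · rw [pow_mul']
    exact (Iso.dist_pow_le_mul hconn _ _ s).trans (Nat.mul_le_mul_left s hupper)
  · rcases Nat.eq_zero_or_pos s with rfl | hs
    · simp
    obtain ⟨c, hc0, hcl, hcB, hcw⟩ :=
      h.exists_chain (Nat.mul_pos hs hL) (hc₀.2 0 (Nat.zero_le _)) (hc₀.2 0 (Nat.zero_le _))
    have := hmin (s * L) c ⟨hcl.trans hc0.symm, hcB⟩
    rw [hcw, ← mul_assoc, mul_comm W] at this
    exact Nat.le_of_mul_le_mul_right this hL

end SimpleGraph

lemma exists_le_apply_mul_of_add_sub_le {a : ℕ → ℕ} {C : ℝ} {N : ℕ}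
    (ha : ∀ i j, N ≤ i → N ≤ j → (a i : ℝ) + a j - C ≤ a (i + j)) (hunbdd : ¬BddAbove (range a))
    (T : ℝ) : ∃ m, N ≤ m ∧ 0 < m ∧ ∀ s ≥ 1, T ≤ a (m * s) := by
  obtain ⟨_, ⟨m, rfl⟩, hm⟩ :=
    not_bddAbove_iff.1 hunbdd (max ⌈max T C⌉₊ ((Finset.range (N + 1)).sup a))
  have hNm : N < m := by
    by_contra! h
    exact hm.not_ge ((Finset.le_sup (Finset.mem_range.2 (Nat.lt_succ_of_le h))).trans
      (le_max_right _ _))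
  have hTC : max T C ≤ a m :=
    (Nat.le_ceil _).trans (by exact_mod_cast (le_max_left _ _).trans hm.le)
  refine ⟨m, hNm.le, by omega, fun s hs => ?_⟩
  induction s, hs using Nat.le_induction with
  | base => simpa using (le_max_left _ _).trans hTC
  | succ s hs ih =>
    have := ha (m * s) m (hNm.le.trans (Nat.le_mul_of_pos_right m hs)) hNm.le
    rw [← mul_add_one] at this
    linarith [(le_max_right T C).trans hTC]

namespace GraphHyp

open SimpleGraph

variable {V : Type*} {G : SimpleGraph V} {δ : ℝ}

lemma splitsThrough (hhyp : GraphHyp G δ) (hδ : 0 ≤ δ) (hconn : G.Connected) (ψ : G ≃g G)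
    (p : V) {K R : ℝ} (hK : ∀ s ≥ 1, gGP G p ((ψ ^ s)⁻¹ p) (ψ p) ≤ K)
    (hR : K + 4 * δ + 1 ≤ R) (hfar : ∀ s ≥ 1, K + 2 * δ + R < G.dist p ((ψ ^ s) p)) :
    G.SplitsThrough ψ {z | (G.dist p z : ℝ) ≤ R} := by
  intro s hs x (hx : (G.dist p x : ℝ) ≤ R) y (hy : (G.dist p y : ℝ) ≤ R)
  set w := (ψ ^ s) p
  set Y := (ψ ^ (s + 1)) y
  set Y' := (ψ ^ (s + 1)) p
  have hpY' : gGP G w p Y' ≤ K := by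
    have h := gGP_map (ψ ^ s) p ((ψ ^ s)⁻¹ p) (ψ p)
    rw [RelIso.apply_inv_self, ← RelIso.mul_apply, ← pow_succ] at h
    exact h ▸ hK s hs
  have hpx : K + δ < gGP G w p x := by
    have h := sub_dist_le_gGP hconn w p x
    rw [G.dist_comm] at h
    linarith [hfar s hs]
  have hY'Y : K + 2 * δ < gGP G w Y' Y := by
    have h := sub_dist_le_gGP hconn w Y' Y
    have hwY' : G.dist w Y' = G.dist p (ψ p) := by
      rw [show Y' = (ψ ^ s) (ψ p) by simp only [Y', pow_succ, RelIso.mul_apply]]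
      exact Iso.dist_map _ _ _
    rw [hwY', Iso.dist_map] at h
    linarith [pow_one ψ ▸ hfar 1 le_rfl]
  obtain ⟨z, hz, hwz⟩ := hhyp.exists_between_dist_le_gGP hconn x Y w
  have hxY := hhyp.gGP_le_of_lt_gGP hpY' hpx hY'Y
  refine ⟨(ψ ^ s)⁻¹ z, ?_, ?_⟩
  · change (G.dist p _ : ℝ) ≤ R
    rw [← Iso.dist_map (ψ ^ s), RelIso.apply_inv_self]
    linarith
  · rw [RelIso.apply_inv_self, ← Iso.dist_map (ψ ^ s) _ (ψ y), RelIso.apply_inv_self,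
      ← RelIso.mul_apply, ← pow_succ]
    exact hz.symm

lemma exists_pow_splitsThrough (hhyp : GraphHyp G δ) (hδ : 0 ≤ δ) (hconn : G.Connected)
    (φ : G ≃g G) (p : V) (hunbdd : ¬BddAbove (range fun n : ℕ => G.dist p ((φ ^ n) p)))
    (hconv : gConvAtInf G p fun n => (φ ^ n) p) (hconv' : gConvAtInf G p fun n => (φ⁻¹ ^ n) p)
    (hne : ¬gEquivAtInf G p (fun n => (φ ^ n) p) fun n => (φ⁻¹ ^ n) p) :
    ∃ m > 0, ∃ R : ℝ, 0 ≤ R ∧ G.SplitsThrough (φ ^ m) {z | (G.dist p z : ℝ) ≤ R} := by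
  obtain ⟨K, N, hK⟩ := hhyp.exists_gGP_le_of_not_gEquivAtInf hδ hconv hconv' hne
  have hsuper : ∀ i j, N ≤ i → N ≤ j → (G.dist p ((φ ^ i) p) : ℝ) + G.dist p ((φ ^ j) p) - 2 * K ≤
      G.dist p ((φ ^ (i + j)) p) := by
    intro i j hi hj
    have h := hK i j hi hj
    have e₁ : G.dist p ((φ⁻¹ ^ j) p) = G.dist p ((φ ^ j) p) := by
      rw [← Iso.dist_map (φ ^ j), inv_pow, RelIso.apply_inv_self, G.dist_comm]
    have e₂ : G.dist ((φ ^ i) p) ((φ⁻¹ ^ j) p) = G.dist p ((φ ^ (i + j)) p) := by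
      rw [← Iso.dist_map (φ ^ j), inv_pow, RelIso.apply_inv_self, ← RelIso.mul_apply, ← pow_add,
        G.dist_comm, add_comm]
    rw [gGP, e₁, e₂] at h
    linarith
  set R := max (K + 4 * δ + 1) 0
  obtain ⟨m, hNm, hm, hfar⟩ := exists_le_apply_mul_of_add_sub_le
    (a := fun n => G.dist p ((φ ^ n) p)) hsuper hunbdd (K + 2 * δ + R + 1)
  refine ⟨m, hm, R, le_max_right _ _,
    hhyp.splitsThrough hδ hconn _ p (fun s hs => ?_) (le_max_left _ _) fun s hs => ?_⟩
  · rw [← pow_mul, ← inv_pow, gGP_comm]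
    exact hK m (m * s) hNm (hNm.trans (Nat.le_mul_of_pos_right m hs))
  · rw [← pow_mul]
    linarith [hfar s hs]

end GraphHyp

namespace SimpleGraph

variable {V : Type*} {G : SimpleGraph V}

lemma dist_le_sub_of_dist_succ_le_one (hconn : G.Connected) {γ : ℤ → V}
    (h1 : ∀ i, G.dist (γ i) (γ (i + 1)) ≤ 1) {i j : ℤ} (hij : i ≤ j) :
    (G.dist (γ i) (γ j) : ℤ) ≤ j - i := by
  obtain ⟨k, rfl⟩ := Int.le.dest hij
  suffices G.dist (γ i) (γ (i + k)) ≤ k by omega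
  induction k with
  | zero => simp
  | succ k ih =>
    have := hconn.dist_triangle (u := γ i) (v := γ (i + k)) (w := γ (i + k + 1))
    have := h1 (i + k)
    push_cast
    rw [← add_assoc]
    omega

lemma dist_eq_abs_sub_of_dist_succ_le_one (hconn : G.Connected) {γ : ℤ → V}
    (h1 : ∀ i, G.dist (γ i) (γ (i + 1)) ≤ 1)
    (hfar : ∀ i j : ℤ, ∃ a ≤ i, ∃ b ≥ j, (G.dist (γ a) (γ b) : ℤ) = b - a) (i j : ℤ) :
    (G.dist (γ i) (γ j) : ℤ) = |i - j| := by
  wlog hij : i ≤ j generalizing i j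
  · rw [G.dist_comm, abs_sub_comm]
    exact this j i (by omega)
  rw [abs_of_nonpos (by omega)]
  obtain ⟨a, ha, b, hb, hab⟩ := hfar i j
  have := hconn.dist_triangle (u := γ a) (v := γ i) (w := γ b)
  have := hconn.dist_triangle (u := γ i) (v := γ j) (w := γ b)
  have := dist_le_sub_of_dist_succ_le_one hconn h1 ha
  have := dist_le_sub_of_dist_succ_le_one hconn h1 hij
  have := dist_le_sub_of_dist_succ_le_one hconn h1 hb
  omega

lemma Iso.exists_geodesic_of_dist_pow_eq_mul (hconn : G.Connected) (ψ : G ≃g G) (x : V) {W : ℕ}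
    (hW : 0 < W) (hx : ∀ s : ℕ, G.dist x ((ψ ^ s) x) = s * W) :
    ∃ γ : ℤ → V, (∀ i j, (G.dist (γ i) (γ j) : ℤ) = |i - j|) ∧ ∀ i, ψ (γ i) = γ (i + W) := by
  obtain ⟨σ, hσ⟩ := hconn.exists_walk_length_eq_dist x (ψ x)
  have hσW : σ.length = W := by simpa using hσ.trans (hx 1)
  have hWz : (0 : ℤ) < W := by exact_mod_cast hW
  let γ : ℤ → V := fun i => (ψ ^ (i / W)) (σ.getVert (i % W).toNat)
  have hγ : ∀ (q : ℤ) (r : ℕ), r < W → γ (r + W * q) = (ψ ^ q) (σ.getVert r) := by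
    intro q r hr
    obtain ⟨hq, hr'⟩ := (Int.ediv_emod_unique (a := r + W * q) hWz).2 ⟨rfl, by omega, by omega⟩
    simp only [γ, hq, hr', Int.toNat_natCast]
  have hγ' : ∀ (q : ℤ) (r : ℕ), r ≤ W → γ (r + W * q) = (ψ ^ q) (σ.getVert r) := by
    intro q r hr
    rcases hr.lt_or_eq with hr | rfl
    · exact hγ q r hr
    have := hγ (q + 1) 0 hW
    rw [zpow_add_one, RelIso.mul_apply, σ.getVert_zero] at this
    rw [← hσW, σ.getVert_length, ← this, hσW]
    congr 1
    ring
  have hdecomp : ∀ i : ℤ, ∃ q : ℤ, ∃ r : ℕ, r < W ∧ i = r + W * q := by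
    intro i
    have := Int.emod_nonneg i hWz.ne'
    have := Int.emod_lt_of_pos i hWz
    exact ⟨i / W, (i % W).toNat, by omega,
      by rw [Int.toNat_of_nonneg (by omega), Int.emod_add_mul_ediv]⟩
  have hfar : ∀ s : ℕ, (G.dist (γ (W * -s)) (γ (W * s)) : ℤ) = W * s - W * -s := by
    intro s
    have h₁ := hγ (-s) 0 hW
    have h₂ := hγ s 0 hW
    simp only [Nat.cast_zero, zero_add, σ.getVert_zero] at h₁ h₂
    rw [h₁, h₂, ← Iso.dist_map (ψ ^ (s : ℤ)), ← RelIso.mul_apply, ← RelIso.mul_apply, ← zpow_add,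
      ← zpow_add, add_neg_cancel, zpow_zero, RelIso.one_apply, ← Nat.cast_add, zpow_natCast, hx]
    push_cast
    ring
  refine ⟨γ, dist_eq_abs_sub_of_dist_succ_le_one hconn (fun i => ?_) (fun i j => ?_), fun i => ?_⟩
  · obtain ⟨q, r, hr, rfl⟩ := hdecomp i
    rw [show (r : ℤ) + W * q + 1 = (r + 1 : ℕ) + W * q by push_cast; ring, hγ' q r hr.le,
      hγ' q (r + 1) hr, Iso.dist_map]
    exact σ.dist_getVert_add_le r 1
  · set s := i.natAbs + j.natAbs
    have hs : (s : ℤ) ≤ W * s := le_mul_of_one_le_left (by positivity) (by omega)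
    exact ⟨W * -s, by rw [mul_neg]; omega, W * s, by omega, hfar s⟩
  · obtain ⟨q, r, hr, rfl⟩ := hdecomp i
    rw [show (r : ℤ) + W * q + W = r + W * (1 + q) by ring, hγ' q r hr.le, hγ' _ r hr.le,
      zpow_one_add, RelIso.mul_apply]

end SimpleGraph

/-- A hyperbolic automorphism `g` of a connected locally finite `δ`-hyperbolic graph has a
power `gⁿ` acting as a translation along some bi-infinite geodesic `γ`. -/
theorem exists_axis
    {V : Type*} (Γ : SimpleGraph V)
    (δ : ℝ) (hδ : 0 ≤ δ)
    (hconn : Γ.Connected) (hlf : ∀ v : V, (Γ.neighborSet v).Finite) (hhyp : GraphHyp Γ δ)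
    (g : V ≃ V) (hadj : ∀ u w : V, Γ.Adj u w ↔ Γ.Adj (g u) (g w))
    (hunbdd : ∀ v : V, ¬ BddAbove (Set.range fun n : ℕ => Γ.dist v ((⇑g)^[n] v)))
    (hhypg : ∀ v : V,
      gConvAtInf Γ v (fun n => (⇑g)^[n] v) ∧
      gConvAtInf Γ v (fun n => (⇑g.symm)^[n] v) ∧
      ¬ gEquivAtInf Γ v (fun n => (⇑g)^[n] v) (fun n => (⇑g.symm)^[n] v)) :
    ∃ γ : ℤ → V, (∀ i j : ℤ, (Γ.dist (γ i) (γ j) : ℤ) = |i - j|) ∧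
      ∃ n : ℕ, 0 < n ∧ ∃ c : ℤ, 0 < c ∧ ∀ i : ℤ, (⇑g)^[n] (γ i) = γ (i + c) := by
  let φ : Γ ≃g Γ := ⟨g, (hadj _ _).symm⟩
  have hφ : ∀ n, (⇑g)^[n] = ⇑(φ ^ n) := fun n => (RelIso.coe_pow φ n).symm
  have hφ' : ∀ n, (⇑g.symm)^[n] = ⇑(φ⁻¹ ^ n) := fun n => (RelIso.coe_pow φ⁻¹ n).symm
  simp only [hφ, hφ'] at hunbdd hhypg ⊢
  obtain ⟨p⟩ := hconn.nonempty
  obtain ⟨hconv, hconv', hne⟩ := hhypg p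
  obtain ⟨m, hm, R, hR, hsplit⟩ :=
    hhyp.exists_pow_splitsThrough hδ hconn φ p (hunbdd p) hconv hconv' hne
  have hB : {z | (Γ.dist p z : ℝ) ≤ R}.Finite :=
    (hconn.finite_setOf_dist_le hlf p ⌊R⌋₊).subset fun z hz => Nat.le_floor hz
  obtain ⟨x, -, L, hL, W, hW⟩ := hsplit.exists_dist_pow_mul_eq hconn hB ⟨p, by simpa using hR⟩
  have hWpos : 0 < W := by
    refine Nat.pos_of_ne_zero fun hW0 => hunbdd x
      (φ.bddAbove_dist_pow_of_pow_apply_eq (Nat.mul_pos hm hL) ?_)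
    have h := hW 1
    rw [one_mul, hW0, mul_zero, hconn.dist_eq_zero_iff, ← pow_mul] at h
    exact h.symm
  obtain ⟨γ, hγ, hγψ⟩ := ((φ ^ m) ^ L).exists_geodesic_of_dist_pow_eq_mul hconn x hWpos
    fun s => by rw [← pow_mul']; exact hW s
  refine ⟨γ, hγ, m * L, Nat.mul_pos hm hL, W, by exact_mod_cast hWpos, fun i => ?_⟩
  rw [pow_mul]
  exact hγψ i
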